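/- arXiv:1212.1811 — 5 statements merged into one kernel-verified Lean document; each statement's English description precedes it below -/
import Mathlib

section
/- The image of the regular map f : ℝ² → ℝ², f(x,y) = ((xy−1)² + x², 1/((xy−1)² + x²)), is the set S = {(a,b) ∈ ℝ² : a > 0 and a·b = 1}. -/
theorem sq_mul_sub_one_add_sq_pos {R : Type*} [Field R] [LinearOrder R] [IsStrictOrderedRing R]
    (x y : R) : 0 < (x * y - 1) ^ 2 + x ^ 2 := by
  rcases eq_or_ne x 0 with rfl | hx
  · norm_num
  · positivity

theorem sq_mul_inv_sub_one_add_sq {R : Type*} [Field R] {x : R} (hx : x ≠ 0) :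
    (x * x⁻¹ - 1) ^ 2 + x ^ 2 = x ^ 2 := by
  simp [mul_inv_cancel₀ hx]

theorem stmt7 :
    Set.range (fun p : ℝ × ℝ =>
        ((p.1 * p.2 - 1) ^ 2 + p.1 ^ 2, ((p.1 * p.2 - 1) ^ 2 + p.1 ^ 2)⁻¹)) =
      {q : ℝ × ℝ | 0 < q.1 ∧ q.1 * q.2 = 1} := by
  ext ⟨a, b⟩
  constructor
  · rintro ⟨⟨x, y⟩, hxy⟩
    obtain ⟨rfl, rfl⟩ := Prod.ext_iff.mp hxy
    have hpos := sq_mul_sub_one_add_sq_pos x y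
    exact ⟨hpos, mul_inv_cancel₀ hpos.ne'⟩
  · rintro ⟨ha : 0 < a, hab : a * b = 1⟩
    have hsqrt : √a ≠ 0 := (Real.sqrt_pos.mpr ha).ne'
    refine ⟨(√a, (√a)⁻¹), ?_⟩
    change ((√a * (√a)⁻¹ - 1) ^ 2 + √a ^ 2, ((√a * (√a)⁻¹ - 1) ^ 2 + √a ^ 2)⁻¹) = (a, b)
    rw [sq_mul_inv_sub_one_add_sq hsqrt, Real.sq_sqrt ha.le, eq_inv_of_mul_eq_one_right hab]
end

section
/- The image of the regular map f : ℝ² → ℝ², f(x,y) = (x²/(1+y²), y²/(1+x²)), is the set S = {(a,b) ∈ ℝ² : a ≥ 0, b ≥ 0, a·b < 1}. -/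
/-!
Only the squares `u = x², v = y²` matter. The product of the two coordinates is
`uv / ((1 + u)(1 + v)) < 1`. Conversely, `u / (1 + v) = a` and `v / (1 + u) = b` is a linear
system in `u, v`, solved by `u = a(1 + b) / (1 - ab)` and `v = b(1 + a) / (1 - ab)`, both
nonnegative exactly when `a, b ≥ 0` and `ab < 1`.
-/

lemma div_one_add_mul_div_one_add_lt_one {u v : ℝ} (hu : 0 ≤ u) (hv : 0 ≤ v) :
    u / (1 + v) * (v / (1 + u)) < 1 := by
  rw [div_mul_div_comm, div_lt_one (by positivity)]
  nlinarith [mul_nonneg hu hv]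

lemma div_one_add_solution_eq {a b : ℝ} (hb : 0 ≤ b) (hab : a * b < 1) :
    a * (1 + b) / (1 - a * b) / (1 + b * (1 + a) / (1 - b * a)) = a := by
  have hd : 1 - a * b ≠ 0 := by linarith
  rw [mul_comm b a, one_add_div hd, div_div_div_cancel_right₀ hd,
    show 1 - a * b + b * (1 + a) = 1 + b by ring, mul_div_cancel_right₀ _ (by positivity)]

theorem stmt9 :
    Set.range (fun p : ℝ × ℝ => (p.1 ^ 2 / (1 + p.2 ^ 2), p.2 ^ 2 / (1 + p.1 ^ 2))) =
      {q : ℝ × ℝ | 0 ≤ q.1 ∧ 0 ≤ q.2 ∧ q.1 * q.2 < 1} := by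
  ext ⟨a, b⟩
  simp only [Set.mem_range, Set.mem_ofPred_eq, Prod.mk.injEq, Prod.exists]
  constructor
  · rintro ⟨x, y, rfl, rfl⟩
    exact ⟨by positivity, by positivity,
      div_one_add_mul_div_one_add_lt_one (sq_nonneg x) (sq_nonneg y)⟩
  · rintro ⟨ha, hb, hab⟩
    have hba : b * a < 1 := by rwa [mul_comm]
    have hd : 0 < 1 - a * b := by linarith
    have hd' : 0 < 1 - b * a := by linarith
    refine ⟨√(a * (1 + b) / (1 - a * b)), √(b * (1 + a) / (1 - b * a)), ?_, ?_⟩ <;>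
      rw [Real.sq_sqrt (div_nonneg (by positivity) hd.le),
        Real.sq_sqrt (div_nonneg (by positivity) hd'.le)]
    · exact div_one_add_solution_eq hb hab
    · exact div_one_add_solution_eq ha hba
end

section
/- Let S = {(a,b) ∈ ℝ² : a ≥ 0, b ≥ 0, a·b < 1}. Then S_∞ := Cl_{ℝP²}(S) ∩ {x₀ = 0} = {(0:1:0), (0:0:1)}, which is disconnected. -/
open Projectivization Filter Topology Set

noncomputable section

instance (K V : Type*) [DivisionRing K] [AddCommGroup V] [Module K V] [TopologicalSpace V] :
    TopologicalSpace (Projectivization K V) := by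
  unfold Projectivization; infer_instance

/-- The embedding of the affine plane `ℝ²` into `ℝP²` as the chart `{x₀ = 1}`. -/
def embR2 (p : ℝ × ℝ) : Projectivization ℝ (Fin 3 → ℝ) :=
  Projectivization.mk ℝ ![1, p.1, p.2] (by intro h; have := congrFun h 0; simp at this)

/-- The line at infinity `{x₀ = 0}` of `ℝP²`. -/
def lineAtInf : Set (Projectivization ℝ (Fin 3 → ℝ)) := {q | q.rep 0 = 0}

/-- The set of points at infinity of `S ⊆ ℝ²`: the closure of `S` in `ℝP²`
intersected with the line at infinity. -/
def ptsAtInf (S : Set (ℝ × ℝ)) : Set (Projectivization ℝ (Fin 3 → ℝ)) :=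
  closure (embR2 '' S) ∩ lineAtInf

/-!
On `S` we have `0 ≤ a * b ≤ 1`. Homogenized, `0 ≤ x₁ x₂ ≤ x₀²` is invariant under rescaling
the representative, so it cuts out a closed subset of `ℝP²` containing the closure of `S`; on the
line `x₀ = 0` it forces `x₁ x₂ = 0`, leaving only `(0:1:0)` and `(0:0:1)`. Both are limits of
`S` along the two axes, since `(1:t:0) = (t⁻¹:1:0) → (0:1:0)` as `t → ∞`. They are separated by
the open sets `x₂² < x₁²` and `x₁² < x₂²`.
-/

open scoped LinearAlgebra.Projectivization

namespace Projectivization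

variable {K V : Type*} [DivisionRing K] [AddCommGroup V] [Module K V]

theorem rep_mk_iff {P : V → Prop} (hP : ∀ (c : Kˣ) (v : V), P (c • v) ↔ P v)
    (v : V) (hv : v ≠ 0) : P (mk K v hv).rep ↔ P v := by
  obtain ⟨a, ha⟩ := exists_smul_eq_mk_rep K v hv
  rw [← ha, hP]

theorem preimage_mk'_setOf_rep {P : V → Prop} (hP : ∀ (c : Kˣ) (v : V), P (c • v) ↔ P v) :
    mk' K ⁻¹' {q : ℙ K V | P q.rep} = Subtype.val ⁻¹' {v | P v} := by
  ext ⟨v, hv⟩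
  exact rep_mk_iff hP v hv

variable [TopologicalSpace V]

theorem isQuotientMap_mk' : IsQuotientMap (mk' K : {v : V // v ≠ 0} → ℙ K V) :=
  isQuotientMap_quotient_mk'

theorem isOpen_setOf_rep {P : V → Prop} (hP : ∀ (c : Kˣ) (v : V), P (c • v) ↔ P v)
    (hopen : IsOpen {v | P v}) : IsOpen {q : ℙ K V | P q.rep} := by
  rw [← isQuotientMap_mk'.isOpen_preimage, preimage_mk'_setOf_rep hP]
  exact hopen.preimage continuous_subtype_val

theorem isClosed_setOf_rep {P : V → Prop} (hP : ∀ (c : Kˣ) (v : V), P (c • v) ↔ P v)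
    (hclosed : IsClosed {v | P v}) : IsClosed {q : ℙ K V | P q.rep} := by
  rw [← isQuotientMap_mk'.isClosed_preimage, preimage_mk'_setOf_rep hP]
  exact hclosed.preimage continuous_subtype_val

end Projectivization

theorem not_isPreconnected_pair_of_separated {X : Type*} [TopologicalSpace X] {a b : X}
    {U V : Set X} (hU : IsOpen U) (hV : IsOpen V) (ha : a ∈ U) (hb : b ∈ V)
    (hUV : Disjoint U V) : ¬ IsPreconnected ({a, b} : Set X) := by
  intro h
  obtain ⟨x, -, hxU, hxV⟩ := h U V hU hV
    (Set.insert_subset (Or.inl ha) (Set.singleton_subset_iff.2 (Or.inr hb)))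
    ⟨a, by simp, ha⟩ ⟨b, by simp, hb⟩
  exact hUV.ne_of_mem hxU hxV rfl

section Homogeneous

variable {V : Type*} [AddCommGroup V] [Module ℝ V] {Q Q' : V → ℝ}

theorem units_smul_le_iff_of_homogeneous (hQ : ∀ (c : ℝ) v, Q (c • v) = c ^ 2 * Q v)
    (hQ' : ∀ (c : ℝ) v, Q' (c • v) = c ^ 2 * Q' v) (c : ℝˣ) (v : V) :
    Q (c • v) ≤ Q' (c • v) ↔ Q v ≤ Q' v := by
  rw [Units.smul_def, hQ, hQ']
  exact mul_le_mul_iff_of_pos_left (pow_two_pos_of_ne_zero c.ne_zero)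

theorem units_smul_lt_iff_of_homogeneous (hQ : ∀ (c : ℝ) v, Q (c • v) = c ^ 2 * Q v)
    (hQ' : ∀ (c : ℝ) v, Q' (c • v) = c ^ 2 * Q' v) (c : ℝˣ) (v : V) :
    Q (c • v) < Q' (c • v) ↔ Q v < Q' v := by
  rw [Units.smul_def, hQ, hQ']
  exact mul_lt_mul_iff_of_pos_left (pow_two_pos_of_ne_zero c.ne_zero)

namespace Projectivization

theorem rep_mk_le_iff (hQ : ∀ (c : ℝ) v, Q (c • v) = c ^ 2 * Q v)
    (hQ' : ∀ (c : ℝ) v, Q' (c • v) = c ^ 2 * Q' v) (v : V) (hv : v ≠ 0) :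
    Q (mk ℝ v hv).rep ≤ Q' (mk ℝ v hv).rep ↔ Q v ≤ Q' v :=
  rep_mk_iff (P := fun v => Q v ≤ Q' v) (units_smul_le_iff_of_homogeneous hQ hQ') v hv

theorem rep_mk_lt_iff (hQ : ∀ (c : ℝ) v, Q (c • v) = c ^ 2 * Q v)
    (hQ' : ∀ (c : ℝ) v, Q' (c • v) = c ^ 2 * Q' v) (v : V) (hv : v ≠ 0) :
    Q (mk ℝ v hv).rep < Q' (mk ℝ v hv).rep ↔ Q v < Q' v :=
  rep_mk_iff (P := fun v => Q v < Q' v) (units_smul_lt_iff_of_homogeneous hQ hQ') v hv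

variable [TopologicalSpace V]

theorem isClosed_setOf_rep_le (hQ : ∀ (c : ℝ) v, Q (c • v) = c ^ 2 * Q v)
    (hQ' : ∀ (c : ℝ) v, Q' (c • v) = c ^ 2 * Q' v) (hQc : Continuous Q)
    (hQc' : Continuous Q') : IsClosed {q : ℙ ℝ V | Q q.rep ≤ Q' q.rep} :=
  isClosed_setOf_rep (P := fun v => Q v ≤ Q' v) (units_smul_le_iff_of_homogeneous hQ hQ')
    (isClosed_le hQc hQc')

theorem isOpen_setOf_rep_lt (hQ : ∀ (c : ℝ) v, Q (c • v) = c ^ 2 * Q v)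
    (hQ' : ∀ (c : ℝ) v, Q' (c • v) = c ^ 2 * Q' v) (hQc : Continuous Q)
    (hQc' : Continuous Q') : IsOpen {q : ℙ ℝ V | Q q.rep < Q' q.rep} :=
  isOpen_setOf_rep (P := fun v => Q v < Q' v) (units_smul_lt_iff_of_homogeneous hQ hQ')
    (isOpen_lt hQc hQc')

end Projectivization

end Homogeneous

section Coordinates

variable {ι : Type*}

theorem smul_apply_mul_smul_apply (c : ℝ) (v : ι → ℝ) (i j : ι) :
    (c • v) i * (c • v) j = c ^ 2 * (v i * v j) := by
  simp only [Pi.smul_apply, smul_eq_mul]; ring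

theorem smul_apply_sq (c : ℝ) (v : ι → ℝ) (i : ι) : (c • v) i ^ 2 = c ^ 2 * v i ^ 2 := by
  simp only [Pi.smul_apply, smul_eq_mul]; ring

end Coordinates

/-- The homogenization of `0 ≤ a * b ≤ 1`. -/
def closedHyperbolicRegion : Set (ℙ ℝ (Fin 3 → ℝ)) :=
  {q | 0 ≤ q.rep 1 * q.rep 2 ∧ q.rep 1 * q.rep 2 ≤ q.rep 0 ^ 2}

theorem isClosed_closedHyperbolicRegion : IsClosed closedHyperbolicRegion :=
  (Projectivization.isClosed_setOf_rep_le (Q := fun _ => 0) (Q' := fun v : Fin 3 → ℝ => v 1 * v 2)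
      (by simp) (fun c v => smul_apply_mul_smul_apply c v 1 2) continuous_const
      (by fun_prop)).inter
    (Projectivization.isClosed_setOf_rep_le (Q := fun v : Fin 3 → ℝ => v 1 * v 2)
      (Q' := fun v => v 0 ^ 2) (fun c v => smul_apply_mul_smul_apply c v 1 2)
      (fun c v => smul_apply_sq c v 0) (by fun_prop) (by fun_prop))

theorem embR2_mem_closedHyperbolicRegion_iff (p : ℝ × ℝ) :
    embR2 p ∈ closedHyperbolicRegion ↔ 0 ≤ p.1 * p.2 ∧ p.1 * p.2 ≤ 1 := by
  unfold embR2 closedHyperbolicRegion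
  rw [Set.mem_ofPred_eq,
    Projectivization.rep_mk_le_iff (Q := fun _ => 0) (Q' := fun v : Fin 3 → ℝ => v 1 * v 2)
      (by simp) (fun c v => smul_apply_mul_smul_apply c v 1 2),
    Projectivization.rep_mk_le_iff (Q := fun v : Fin 3 → ℝ => v 1 * v 2)
      (Q' := fun v => v 0 ^ 2) (fun c v => smul_apply_mul_smul_apply c v 1 2)
      (fun c v => smul_apply_sq c v 0)]
  simp

theorem closure_embR2_image_subset {S : Set (ℝ × ℝ)}
    (hS : ∀ p ∈ S, 0 ≤ p.1 * p.2 ∧ p.1 * p.2 ≤ 1) :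
    closure (embR2 '' S) ⊆ closedHyperbolicRegion :=
  closure_minimal
    (Set.image_subset_iff.2 fun p hp => (embR2_mem_closedHyperbolicRegion_iff p).2 (hS p hp))
    isClosed_closedHyperbolicRegion

theorem mk_mem_lineAtInf_iff (v : Fin 3 → ℝ) (hv : v ≠ 0) :
    Projectivization.mk ℝ v hv ∈ lineAtInf ↔ v 0 = 0 :=
  Projectivization.rep_mk_iff (P := fun v : Fin 3 → ℝ => v 0 = 0)
    (fun c v => by simp [Units.smul_def]) v hv

def fstAxisAtInf : ℙ ℝ (Fin 3 → ℝ) := Projectivization.mk ℝ ![0, 1, 0] (by simp)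

def sndAxisAtInf : ℙ ℝ (Fin 3 → ℝ) := Projectivization.mk ℝ ![0, 0, 1] (by simp)

theorem closedHyperbolicRegion_inter_lineAtInf_subset :
    closedHyperbolicRegion ∩ lineAtInf ⊆ {fstAxisAtInf, sndAxisAtInf} := by
  rintro q ⟨⟨hnonneg, hle⟩, h0 : q.rep 0 = 0⟩
  have h12 : q.rep 1 * q.rep 2 = 0 := le_antisymm (by simpa [h0] using hle) hnonneg
  rw [← Projectivization.mk_rep q]
  rcases mul_eq_zero.1 h12 with h1 | h2
  · right
    rw [Set.mem_singleton_iff, sndAxisAtInf, Projectivization.mk_eq_mk_iff']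
    exact ⟨q.rep 2, by ext i; fin_cases i <;> simp [h0, h1]⟩
  · left
    rw [fstAxisAtInf, Projectivization.mk_eq_mk_iff']
    exact ⟨q.rep 1, by ext i; fin_cases i <;> simp [h0, h2]⟩

theorem mk_mem_ptsAtInf {S : Set (ℝ × ℝ)} {v : Fin 3 → ℝ} (hv : v ≠ 0) (hv0 : v 0 = 0)
    (hS : ∀ t : ℝ, 0 < t → (t * v 1, t * v 2) ∈ S) :
    Projectivization.mk ℝ v hv ∈ ptsAtInf S := by
  refine ⟨?_, (mk_mem_lineAtInf_iff v hv).2 hv0⟩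
  have hw : ∀ s : ℝ, ![s, v 1, v 2] ≠ 0 := fun s h => hv <| by
    ext i; fin_cases i
    exacts [hv0, congrFun h 1, congrFun h 2]
  let w : ℝ → ℙ ℝ (Fin 3 → ℝ) := fun s => Projectivization.mk ℝ ![s, v 1, v 2] (hw s)
  have hwc : Continuous w :=
    Projectivization.isQuotientMap_mk'.continuous.comp
      ((by fun_prop : Continuous fun s : ℝ => ![s, v 1, v 2]).subtype_mk hw)
  have hw0 : w 0 = Projectivization.mk ℝ v hv := by
    simp only [w]; congr 1; ext i; fin_cases i <;> simp [hv0]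
  have hwS : w '' Set.Ioi 0 ⊆ embR2 '' S := by
    rintro _ ⟨s, hs, rfl⟩
    refine ⟨(s⁻¹ * v 1, s⁻¹ * v 2), hS _ (inv_pos.2 hs), ?_⟩
    rw [embR2, Projectivization.mk_eq_mk_iff']
    exact ⟨s⁻¹, by ext i; fin_cases i <;> simp [(Set.mem_Ioi.1 hs).ne']⟩
  exact hw0 ▸ closure_mono hwS (mem_closure_image hwc.continuousAt (by simp))

theorem not_isPreconnected_fstAxisAtInf_sndAxisAtInf :
    ¬ IsPreconnected ({fstAxisAtInf, sndAxisAtInf} : Set (ℙ ℝ (Fin 3 → ℝ))) := by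
  let U (i j : Fin 3) : Set (ℙ ℝ (Fin 3 → ℝ)) := {q | q.rep i ^ 2 < q.rep j ^ 2}
  have hU : ∀ i j, IsOpen (U i j) := fun i j =>
    Projectivization.isOpen_setOf_rep_lt (Q := fun v => v i ^ 2) (Q' := fun v => v j ^ 2)
      (fun c v => smul_apply_sq c v i) (fun c v => smul_apply_sq c v j) (by fun_prop)
      (by fun_prop)
  have hmk : ∀ i j v hv, Projectivization.mk ℝ v hv ∈ U i j ↔ v i ^ 2 < v j ^ 2 := fun i j =>
    Projectivization.rep_mk_lt_iff (Q := fun v : Fin 3 → ℝ => v i ^ 2) (Q' := fun v => v j ^ 2)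
      (fun c v => smul_apply_sq c v i) (fun c v => smul_apply_sq c v j)
  exact not_isPreconnected_pair_of_separated (hU 2 1) (hU 1 2) ((hmk 2 1 _ _).2 (by simp))
    ((hmk 1 2 _ _).2 (by simp)) (Set.disjoint_left.2 fun _ h h' => lt_asymm (α := ℝ) h h')

theorem stmt10 :
    (ptsAtInf {q : ℝ × ℝ | 0 ≤ q.1 ∧ 0 ≤ q.2 ∧ q.1 * q.2 < 1} =
      {Projectivization.mk ℝ ![0, 1, 0] (by intro h; have := congrFun h 1; simp at this),
       Projectivization.mk ℝ ![0, 0, 1] (by intro h; have := congrFun h 2; simp at this)}) ∧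
    ¬ IsConnected (ptsAtInf {q : ℝ × ℝ | 0 ≤ q.1 ∧ 0 ≤ q.2 ∧ q.1 * q.2 < 1}) := by
  set S : Set (ℝ × ℝ) := {q | 0 ≤ q.1 ∧ 0 ≤ q.2 ∧ q.1 * q.2 < 1}
  have hS : ∀ p ∈ S, 0 ≤ p.1 * p.2 ∧ p.1 * p.2 ≤ 1 := fun p ⟨h1, h2, h12⟩ =>
    ⟨mul_nonneg h1 h2, h12.le⟩
  have hpts : ptsAtInf S = {fstAxisAtInf, sndAxisAtInf} := by
    refine subset_antisymm ?_ (Set.insert_subset ?_ (Set.singleton_subset_iff.2 ?_))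
    · exact (Set.inter_subset_inter_left _ (closure_embR2_image_subset hS)).trans
        closedHyperbolicRegion_inter_lineAtInf_subset
    · exact mk_mem_ptsAtInf _ rfl fun t ht => ⟨by simpa using ht.le, by simp, by simp⟩
    · exact mk_mem_ptsAtInf _ rfl fun t ht => ⟨by simp, by simpa using ht.le, by simp⟩
  exact ⟨hpts, fun h => not_isPreconnected_fstAxisAtInf_sndAxisAtInf (hpts ▸ h.isPreconnected)⟩
end
end

section
/- For every (x,y) ∈ ℝ², the image of the map f(x,y) = ((1+x⁴)y⁶/(1+y⁴)², (1+y⁴)x⁴/(1+x⁴)³) satisfies a²·b ≤ 1, a ≥ 0, b ≥ 0 where (a,b) := f(x,y). Consequently the set of points at infinity of f(ℝ²) is contained in {(0:1:0), (0:0:1)}. -/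
open Projectivization Filter Topology Set

noncomputable section

/-- The regular map of Example 4.1(iii). -/
def fEx (p : ℝ × ℝ) : ℝ × ℝ :=
  ((1 + p.1 ^ 4) * p.2 ^ 6 / (1 + p.2 ^ 4) ^ 2,
   (1 + p.2 ^ 4) * p.1 ^ 4 / (1 + p.1 ^ 4) ^ 3)

/-! The image of `fEx` lies in `{a, b ≥ 0, a²b ≤ 1}`, since `a²b = (y⁴/(1+y⁴))³ · x⁴/(1+x⁴)`.
In homogeneous coordinates the last condition, multiplied by `b`, becomes
`x₁²x₂² ≤ x₂x₀³`: both sides are homogeneous of degree four, so it cuts out a closed subset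
of `ℝP²` containing the image, hence its closure. On the line at infinity `x₀ = 0` it forces
`x₁x₂ = 0`. -/

namespace Projectivization

variable {K V : Type*} [DivisionRing K] [AddCommGroup V] [Module K V]

theorem rep_mk_mem_iff {s : Set V} (hs : ∀ (a : Kˣ) (v : V), a • v ∈ s ↔ v ∈ s)
    {v : V} (hv : v ≠ 0) : (mk K v hv).rep ∈ s ↔ v ∈ s := by
  obtain ⟨a, ha⟩ := (mk_eq_mk_iff K _ v (rep_nonzero _) hv).mp (mk_rep _)
  rw [← ha, hs]

theorem isClosed_setOf_rep_mem [TopologicalSpace V] {s : Set V} (hs_closed : IsClosed s)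
    (hs : ∀ (a : Kˣ) (v : V), a • v ∈ s ↔ v ∈ s) :
    IsClosed {q : Projectivization K V | q.rep ∈ s} := by
  refine isQuotientMap_quot_mk.isClosed_preimage.mp ?_
  convert hs_closed.preimage continuous_subtype_val using 1
  ext ⟨v, hv⟩
  exact rep_mk_mem_iff hs hv

end Projectivization

theorem div_one_add_mem_Icc {u : ℝ} (hu : 0 ≤ u) : u / (1 + u) ∈ Icc 0 1 :=
  ⟨by positivity, div_le_one_of_le₀ (by linarith) (by positivity)⟩

theorem fEx_fst_sq_mul_snd (p : ℝ × ℝ) :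
    (fEx p).1 ^ 2 * (fEx p).2 = (p.2 ^ 4 / (1 + p.2 ^ 4)) ^ 3 * (p.1 ^ 4 / (1 + p.1 ^ 4)) := by
  unfold fEx
  field_simp

theorem fEx_bounds (p : ℝ × ℝ) :
    0 ≤ (fEx p).1 ∧ 0 ≤ (fEx p).2 ∧ (fEx p).1 ^ 2 * (fEx p).2 ≤ 1 := by
  obtain ⟨hy0, hy1⟩ := div_one_add_mem_Icc (by positivity : (0 : ℝ) ≤ p.2 ^ 4)
  obtain ⟨hx0, hx1⟩ := div_one_add_mem_Icc (by positivity : (0 : ℝ) ≤ p.1 ^ 4)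
  refine ⟨by unfold fEx; positivity, by unfold fEx; positivity, ?_⟩
  rw [fEx_fst_sq_mul_snd]
  exact mul_le_one₀ (pow_le_one₀ hy0 hy1) hx0 hx1

def quarticCone : Set (Fin 3 → ℝ) := {v | v 1 ^ 2 * v 2 ^ 2 ≤ v 2 * v 0 ^ 3}

theorem isClosed_quarticCone : IsClosed quarticCone :=
  isClosed_le (by fun_prop) (by fun_prop)

theorem smul_mem_quarticCone_iff (a : ℝˣ) (v : Fin 3 → ℝ) :
    a • v ∈ quarticCone ↔ v ∈ quarticCone := by
  have ha : (0 : ℝ) < (a : ℝ) ^ 4 := (by decide : Even 4).pow_pos a.ne_zero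
  simp only [quarticCone, mem_ofPred_eq, Units.smul_def, Pi.smul_apply, smul_eq_mul]
  rw [show ∀ x y : ℝ, (a * x) ^ 2 * (a * y) ^ 2 = (a : ℝ) ^ 4 * (x ^ 2 * y ^ 2) by intros; ring,
    show ∀ x y : ℝ, a * y * (a * x) ^ 3 = (a : ℝ) ^ 4 * (y * x ^ 3) by intros; ring,
    mul_le_mul_iff_right₀ ha]

theorem embR2_rep_mem_quarticCone {a b : ℝ} (hb : 0 ≤ b) (hab : a ^ 2 * b ≤ 1) :
    (embR2 (a, b)).rep ∈ quarticCone := by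
  rw [embR2, Projectivization.rep_mk_mem_iff smul_mem_quarticCone_iff]
  show a ^ 2 * b ^ 2 ≤ b * 1 ^ 3
  nlinarith

theorem closure_embR2_image_range_fEx_subset :
    closure (embR2 '' range fEx) ⊆ {q | q.rep ∈ quarticCone} := by
  refine closure_minimal ?_
    (Projectivization.isClosed_setOf_rep_mem isClosed_quarticCone smul_mem_quarticCone_iff)
  rintro _ ⟨_, ⟨p, rfl⟩, rfl⟩
  obtain ⟨-, hb, hab⟩ := fEx_bounds p
  exact embR2_rep_mem_quarticCone hb hab

theorem stmt11 :
    (∀ p : ℝ × ℝ, 0 ≤ (fEx p).1 ∧ 0 ≤ (fEx p).2 ∧ (fEx p).1 ^ 2 * (fEx p).2 ≤ 1) ∧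
    ptsAtInf (Set.range fEx) ⊆
      {Projectivization.mk ℝ ![0, 1, 0] (by intro h; have := congrFun h 1; simp at this),
       Projectivization.mk ℝ ![0, 0, 1] (by intro h; have := congrFun h 2; simp at this)} := by
  refine ⟨fEx_bounds, ?_⟩
  rintro q ⟨hq_closure, hq_inf⟩
  have h0 : q.rep 0 = 0 := hq_inf
  have hcone : q.rep 1 ^ 2 * q.rep 2 ^ 2 ≤ q.rep 2 * q.rep 0 ^ 3 :=
    closure_embR2_image_range_fEx_subset hq_closure
  have h12 : q.rep 1 * q.rep 2 = 0 := by
    rw [h0] at hcone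
    nlinarith [sq_nonneg (q.rep 1 * q.rep 2)]
  rw [← q.mk_rep, mem_insert_iff, mem_singleton_iff, mk_eq_mk_iff', mk_eq_mk_iff']
  rcases mul_eq_zero.mp h12 with h1 | h2
  · exact Or.inr ⟨q.rep 2, by ext i; fin_cases i <;> simp [h0, h1]⟩
  · exact Or.inl ⟨q.rep 1, by ext i; fin_cases i <;> simp [h0, h2]⟩
end
end

section
/- Let h : ℝ² → ℝ² be given by h(x,y) = ( x((y−1)²y² + 2(x−1)²x) / (1 + x(x−1)²y(y−1)²), y((x−1)²x² + 2(y−1)²y) / (1 + x(x−1)²y(y−1)²) ). Then for all (x,y) with 0 < x ≤ 1 and y ≥ 4, writing (a,b) := h(x,y), one has a > 0 and b ≥ 2a; in particular h maps A₁ := {0 < x ≤ 1, 4 ≤ y} into B₁ := {0 < 2a ≤ b}. -/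
/-! Both components of `h` share the positive denominator `1 + x(x-1)²y(y-1)²`, so it suffices to
compare numerators, whose difference `y N₂ - 2 x N₁` is `2(1-x)(y-1)²y² + (y-4)(x-1)²x²`. -/

lemma denom_pos {x y : ℝ} (hx : 0 ≤ x) (hy : 0 ≤ y) :
    0 < 1 + x * (x - 1) ^ 2 * y * (y - 1) ^ 2 := by
  positivity

lemma first_numerator_pos {x y : ℝ} (hx : 0 < x) (hy : 1 < y) :
    0 < x * ((y - 1) ^ 2 * y ^ 2 + 2 * (x - 1) ^ 2 * x) := by
  have hy1 : 0 < (y - 1) ^ 2 * y ^ 2 := by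
    have : y - 1 ≠ 0 := by linarith
    positivity
  positivity

lemma second_numerator_sub_two_mul_first (x y : ℝ) :
    y * ((x - 1) ^ 2 * x ^ 2 + 2 * (y - 1) ^ 2 * y) - 2 * (x * ((y - 1) ^ 2 * y ^ 2 + 2 * (x - 1) ^ 2 * x))
      = 2 * (1 - x) * (y - 1) ^ 2 * y ^ 2 + (y - 4) * (x - 1) ^ 2 * x ^ 2 := by
  ring

lemma two_mul_first_numerator_le_second {x y : ℝ} (hx : x ≤ 1) (hy : 4 ≤ y) :
    2 * (x * ((y - 1) ^ 2 * y ^ 2 + 2 * (x - 1) ^ 2 * x))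
      ≤ y * ((x - 1) ^ 2 * x ^ 2 + 2 * (y - 1) ^ 2 * y) := by
  rw [← sub_nonneg, second_numerator_sub_two_mul_first]
  have h1 : 0 ≤ 1 - x := by linarith
  have h4 : 0 ≤ y - 4 := by linarith
  positivity

theorem stmt17 :
    let h : ℝ × ℝ → ℝ × ℝ := fun p =>
      (p.1 * ((p.2 - 1) ^ 2 * p.2 ^ 2 + 2 * (p.1 - 1) ^ 2 * p.1) /
         (1 + p.1 * (p.1 - 1) ^ 2 * p.2 * (p.2 - 1) ^ 2),
       p.2 * ((p.1 - 1) ^ 2 * p.1 ^ 2 + 2 * (p.2 - 1) ^ 2 * p.2) /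
         (1 + p.1 * (p.1 - 1) ^ 2 * p.2 * (p.2 - 1) ^ 2))
    ∀ x y : ℝ, 0 < x → x ≤ 1 → 4 ≤ y →
      0 < (h (x, y)).1 ∧ 2 * (h (x, y)).1 ≤ (h (x, y)).2 := by
  intro h x y hx hx1 hy
  have hD := denom_pos hx.le (by linarith : (0 : ℝ) ≤ y)
  refine ⟨div_pos (first_numerator_pos hx (by linarith)) hD, ?_⟩
  rw [← mul_div_assoc]
  exact div_le_div_of_nonneg_right (two_mul_first_numerator_le_second hx1 hy) hD.le
end
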